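/- arXiv:math/0112283 — 5 statements merged into one kernel-verified Lean document; each statement's English description precedes it below -/
import Mathlib

section
/- Let k be an algebraically closed field of characteristic 2 and let 𝔽₄ = {a ∈ k : a⁴ = a} be its unique subfield with four elements. Let F₆ = x₀x₁x₂(x₀³+x₁³+x₂³) ∈ k[x₀,x₁,x₂]. For a nonzero vector (x₀,x₁,x₂) ∈ k³, the three partial derivatives ∂F₆/∂x₀, ∂F₆/∂x₁, ∂F₆/∂x₂ all vanish at (x₀,x₁,x₂) if and only if there exists a nonzero λ ∈ k such that (λx₀, λx₁, λx₂) ∈ 𝔽₄³. In other words, the common zeros of the partial derivatives of F₆ in ℙ²(k) are exactly the 21 points of ℙ²(𝔽₄). -/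
open MvPolynomial

/-- The sextic form `x₀x₁x₂(x₀³+x₁³+x₂³)`. -/
noncomputable def F₆ (k : Type*) [CommRing k] : MvPolynomial (Fin 3) k :=
  X 0 * X 1 * X 2 * (X 0 ^ 3 + X 1 ^ 3 + X 2 ^ 3)

/-!
In characteristic 2, `∂F₆/∂x₀ = x₁x₂(x₁³ + x₂³)` (the term `4x₀³x₁x₂` vanishes), and symmetrically
for the other variables. So the partials vanish at `v` exactly when all nonzero coordinates of `v`
have the same cube. Dividing by one nonzero coordinate then makes every coordinate `0` or a cube
root of unity, i.e. a root of `a⁴ = a`; conversely such a rescaling forces equal cubes.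
-/

theorem pow_succ_eq_self_iff {M₀ : Type*} [MonoidWithZero M₀] [IsLeftCancelMulZero M₀] {x : M₀}
    (n : ℕ) : x ^ (n + 1) = x ↔ x = 0 ∨ x ^ n = 1 := by
  rw [pow_succ', mul_right_eq_self₀, or_comm]

theorem exists_ne_zero_forall_mul_pow_succ_eq_self_iff {ι K : Type*} [Field K] {v : ι → K}
    (hv : v ≠ 0) (n : ℕ) :
    (∃ c : K, c ≠ 0 ∧ ∀ i, (c * v i) ^ (n + 1) = c * v i) ↔
      ∀ i j, v i ≠ 0 → v j ≠ 0 → v i ^ n = v j ^ n := by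
  simp only [pow_succ_eq_self_iff]
  constructor
  · rintro ⟨c, hc, hcv⟩ i j hi hj
    refine mul_left_cancel₀ (pow_ne_zero n hc) ?_
    rw [← mul_pow, ← mul_pow, (hcv i).resolve_left (mul_ne_zero hc hi),
      (hcv j).resolve_left (mul_ne_zero hc hj)]
  · intro h
    obtain ⟨j, hj⟩ := Function.ne_iff.mp hv
    refine ⟨(v j)⁻¹, inv_ne_zero hj, fun i => or_iff_not_imp_left.mpr fun hi => ?_⟩
    rw [mul_pow, h i j (right_ne_zero_of_mul hi) hj, inv_pow, inv_mul_cancel₀ (pow_ne_zero n hj)]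

theorem CharTwo.mul_mul_add_pow_eq_zero_iff {R : Type*} [CommRing R] [NoZeroDivisors R]
    [CharP R 2] {a b : R} (n : ℕ) :
    a * b * (a ^ n + b ^ n) = 0 ↔ (a ≠ 0 → b ≠ 0 → a ^ n = b ^ n) := by
  rw [mul_eq_zero, mul_eq_zero, CharTwo.add_eq_zero]
  tauto

section CharTwo

variable {k : Type*} [CommRing k] [CharP k 2]

theorem pderiv_zero_F₆ : pderiv 0 (F₆ k) = X 1 * X 2 * (X 1 ^ 3 + X 2 ^ 3) := by
  simp only [F₆, Derivation.leibniz, Derivation.leibniz_pow, map_add, pderiv_X_self,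
    pderiv_X_of_ne, ne_eq, Fin.reduceEq, not_false_eq_true, smul_eq_mul, nsmul_eq_mul]
  linear_combination (2 * X 0 ^ 3 * X 1 * X 2) * (CharTwo.two_eq_zero : (2 : MvPolynomial _ k) = 0)

theorem pderiv_one_F₆ : pderiv 1 (F₆ k) = X 0 * X 2 * (X 0 ^ 3 + X 2 ^ 3) := by
  simp only [F₆, Derivation.leibniz, Derivation.leibniz_pow, map_add, pderiv_X_self,
    pderiv_X_of_ne, ne_eq, Fin.reduceEq, not_false_eq_true, smul_eq_mul, nsmul_eq_mul]
  linear_combination (2 * X 1 ^ 3 * X 0 * X 2) * (CharTwo.two_eq_zero : (2 : MvPolynomial _ k) = 0)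

theorem pderiv_two_F₆ : pderiv 2 (F₆ k) = X 0 * X 1 * (X 0 ^ 3 + X 1 ^ 3) := by
  simp only [F₆, Derivation.leibniz, Derivation.leibniz_pow, map_add, pderiv_X_self,
    pderiv_X_of_ne, ne_eq, Fin.reduceEq, not_false_eq_true, smul_eq_mul, nsmul_eq_mul]
  linear_combination (2 * X 2 ^ 3 * X 0 * X 1) * (CharTwo.two_eq_zero : (2 : MvPolynomial _ k) = 0)

end CharTwo

theorem stmt_0_general (k : Type*) [Field k] [CharP k 2]
    (v : Fin 3 → k) (hv : v ≠ 0) :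
    (∀ i : Fin 3, eval v (pderiv i (F₆ k)) = 0) ↔
      ∃ lam : k, lam ≠ 0 ∧ ∀ i : Fin 3, (lam * v i) ^ 4 = lam * v i := by
  rw [exists_ne_zero_forall_mul_pow_succ_eq_self_iff hv 3]
  simp only [Fin.forall_fin_succ, IsEmpty.forall_iff, and_true, Fin.succ_zero_eq_one,
    Fin.succ_one_eq_two, pderiv_zero_F₆, pderiv_one_F₆, pderiv_two_F₆, map_mul, map_add, map_pow,
    eval_X, CharTwo.mul_mul_add_pow_eq_zero_iff]
  -- the nine pairs on the right reduce to the three on the left by reflexivity and symmetry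
  grind

/-- For a nonzero vector over an algebraically closed field `k` of characteristic 2, all three
partial derivatives of `F₆` vanish iff the vector is proportional to a vector with coordinates
in the subfield `𝔽₄ = {a : a⁴ = a}` of `k`. -/
theorem stmt_0 (k : Type*) [Field k] [IsAlgClosed k] [CharP k 2]
    (v : Fin 3 → k) (hv : v ≠ 0) :
    (∀ i : Fin 3, eval v (pderiv i (F₆ k)) = 0) ↔
      ∃ lam : k, lam ≠ 0 ∧ ∀ i : Fin 3, (lam * v i) ^ 4 = lam * v i :=
  stmt_0_general k v hv
end

section
/- The 𝔽₄-vector space of homogeneous polynomials of degree 5 in 𝔽₄[x₀,x₁,x₂] that vanish at every point of 𝔽₄³ is spanned by the three polynomials x₀⁴x₁ + x₀x₁⁴, x₀⁴x₂ + x₀x₂⁴, and x₁⁴x₂ + x₁x₂⁴. -/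
open MvPolynomial

private noncomputable def e3 (a b c : ℕ) : Fin 3 →₀ ℕ :=
  Finsupp.single 0 a + Finsupp.single 1 b + Finsupp.single 2 c

private lemma e3_apply0 (a b c : ℕ) : e3 a b c 0 = a := by
  simp [e3, Finsupp.single_apply]

private lemma e3_apply1 (a b c : ℕ) : e3 a b c 1 = b := by
  simp [e3, Finsupp.single_apply]

private lemma e3_apply2 (a b c : ℕ) : e3 a b c 2 = c := by
  simp [e3, Finsupp.single_apply]

private lemma e3_decomp (d : Fin 3 →₀ ℕ) : d = e3 (d 0) (d 1) (d 2) := by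
  ext i
  fin_cases i <;> simp [e3, Finsupp.single_apply]

private lemma e3_inj : ∀ t t' : ℕ × ℕ × ℕ,
    e3 t.1 t.2.1 t.2.2 = e3 t'.1 t'.2.1 t'.2.2 → t = t' := by
  rintro ⟨a,b,c⟩ ⟨a',b',c'⟩ h
  have h0 := congrArg (fun f => f 0) h
  have h1 := congrArg (fun f => f 1) h
  have h2 := congrArg (fun f => f 2) h
  simp only [e3_apply0, e3_apply1, e3_apply2] at h0 h1 h2
  simp_all

private lemma monomial_e3 {R : Type*} [CommSemiring R] (a b c : ℕ) (k : R) :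
    (monomial (e3 a b c)) k = C k * X 0 ^ a * X 1 ^ b * X 2 ^ c := by
  rw [X_pow_eq_monomial, X_pow_eq_monomial, X_pow_eq_monomial, C_apply,
    monomial_mul, monomial_mul, monomial_mul, e3]
  simp

private lemma eval_monomial_e3 {R : Type*} [CommSemiring R] (x y z : R) (a b c : ℕ) (k : R) :
    eval ![x, y, z] ((monomial (e3 a b c)) k) = k * (x ^ a * y ^ b * z ^ c) := by
  rw [monomial_e3]
  simp [mul_assoc]

private def T21 : Finset (ℕ × ℕ × ℕ) :=
  {(5,0,0), (4,1,0), (4,0,1), (3,2,0), (3,0,2), (3,1,1), (2,3,0), (2,0,3), (2,2,1), (2,1,2), (1,4,0), (1,0,4), (1,3,1), (1,1,3), (1,2,2), (0,5,0), (0,0,5), (0,4,1), (0,1,4), (0,3,2), (0,2,3)}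

private lemma mem_T21 {a b c : ℕ} (h : a + b + c = 5) : (a, b, c) ∈ T21 := by
  have ha : a ≤ 5 := by omega
  have hb : b ≤ 5 := by omega
  have hc : c ≤ 5 := by omega
  interval_cases a <;> interval_cases b <;> interval_cases c <;> simp_all <;> decide

private lemma F4_pow (x : GaloisField 2 2) : x ^ 4 = x := by
  haveI : Fintype (GaloisField 2 2) := Fintype.ofFinite _
  have hc : Fintype.card (GaloisField 2 2) = 4 := by
    rw [← Nat.card_eq_fintype_card, GaloisField.card 2 2 (by norm_num)]
    norm_num
  have := FiniteField.pow_card x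
  rwa [hc] at this

private lemma F4_two : (2 : GaloisField 2 2) = 0 := by
  exact_mod_cast CharP.cast_eq_zero (GaloisField 2 2) 2

private lemma F4_card [Fintype (GaloisField 2 2)] : Fintype.card (GaloisField 2 2) = 4 := by
  rw [← Nat.card_eq_fintype_card, GaloisField.card 2 2 (by norm_num)]
  norm_num

private lemma exists_omega : ∃ w : GaloisField 2 2, w ^ 2 = w + 1 := by
  classical
  haveI : Fintype (GaloisField 2 2) := Fintype.ofFinite _
  have hcard : Fintype.card (GaloisField 2 2) = 4 := F4_card
  have : ∃ w : GaloisField 2 2, w ≠ 0 ∧ w ≠ 1 := by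
    by_contra hcon
    push_neg at hcon
    have hsub : (Finset.univ : Finset (GaloisField 2 2)) ⊆ {0, 1} := by
      intro x _
      rcases eq_or_ne x 0 with h | h
      · simp [h]
      · simp [hcon x h]
    have := Finset.card_le_card hsub
    rw [Finset.card_univ, hcard] at this
    have h2 : ({0, 1} : Finset (GaloisField 2 2)).card ≤ 2 := by
      apply le_trans (Finset.card_insert_le _ _)
      simp
    omega
  obtain ⟨w, hw0, hw1⟩ := this
  have h4 : w ^ 4 = w := F4_pow w
  have h3 : w ^ 3 = 1 := by
    have : w * w ^ 3 = w * 1 := by linear_combination h4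
    exact mul_left_cancel₀ hw0 this
  have hfac : (w - 1) * (w ^ 2 + w + 1) = 0 := by linear_combination h3
  rcases mul_eq_zero.mp hfac with h | h
  · exact absurd (sub_eq_zero.mp h) hw1
  · exact ⟨w, by linear_combination h - (w + 1) * F4_two⟩

set_option maxHeartbeats 1000000 in
/-- The homogeneous quintics over `𝔽₄` vanishing at every point of `𝔽₄³` are exactly the
`𝔽₄`-linear combinations of `x₀⁴x₁ + x₀x₁⁴`, `x₀⁴x₂ + x₀x₂⁴` and `x₁⁴x₂ + x₁x₂⁴`. -/
theorem stmt_2 (P : MvPolynomial (Fin 3) (GaloisField 2 2)) :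
    (P.IsHomogeneous 5 ∧ ∀ v : Fin 3 → GaloisField 2 2, eval v P = 0) ↔
      P ∈ Submodule.span (GaloisField 2 2)
        ({X 0 ^ 4 * X 1 + X 0 * X 1 ^ 4,
          X 0 ^ 4 * X 2 + X 0 * X 2 ^ 4,
          X 1 ^ 4 * X 2 + X 1 * X 2 ^ 4} :
          Set (MvPolynomial (Fin 3) (GaloisField 2 2))) := by
  set F := GaloisField 2 2
  have h2 : (2 : F) = 0 := F4_two
  have hx4 : ∀ x : F, x ^ 4 = x := F4_pow
  constructor
  · rintro ⟨hhom, h⟩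
    obtain ⟨ω, hw⟩ := exists_omega
    -- the 21 coefficients
    have hsupp : P.support ⊆ T21.image (fun t : ℕ × ℕ × ℕ => e3 t.1 t.2.1 t.2.2) := by
      intro d hd
      have hne : coeff d P ≠ 0 := mem_support_iff.mp hd
      have hdeg : d.degree = 5 := by
        by_contra hc
        exact hne (hhom.coeff_eq_zero hc)
      have hsum : d 0 + d 1 + d 2 = 5 := by
        have : d.degree = ∑ i : Fin 3, d i := by
          rw [Finsupp.degree]
          exact Finset.sum_subset (Finset.subset_univ _)
            (fun i _ hi => Finsupp.notMem_support_iff.mp hi)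
        rw [this, Fin.sum_univ_three] at hdeg
        exact hdeg
      rw [Finset.mem_image]
      exact ⟨(d 0, d 1, d 2), mem_T21 hsum, (e3_decomp d).symm⟩
    have hP1 : P = ∑ t ∈ T21,
        (monomial (e3 t.1 t.2.1 t.2.2)) (coeff (e3 t.1 t.2.1 t.2.2) P) := by
      conv_lhs => rw [P.as_sum]
      rw [← Finset.sum_image (f := fun d => (monomial d) (coeff d P))
        (g := fun t : ℕ × ℕ × ℕ => e3 t.1 t.2.1 t.2.2)
        (fun t _ t' _ hh => e3_inj t t' hh)]
      exact Finset.sum_subset hsupp (fun d _ hd => by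
        rw [notMem_support_iff.mp hd, monomial_zero])
    have hP2 : P = (monomial (e3 5 0 0)) (coeff (e3 5 0 0) P) + (monomial (e3 4 1 0)) (coeff (e3 4 1 0) P) + (monomial (e3 4 0 1)) (coeff (e3 4 0 1) P) + (monomial (e3 3 2 0)) (coeff (e3 3 2 0) P) + (monomial (e3 3 0 2)) (coeff (e3 3 0 2) P) + (monomial (e3 3 1 1)) (coeff (e3 3 1 1) P) + (monomial (e3 2 3 0)) (coeff (e3 2 3 0) P) + (monomial (e3 2 0 3)) (coeff (e3 2 0 3) P) + (monomial (e3 2 2 1)) (coeff (e3 2 2 1) P) + (monomial (e3 2 1 2)) (coeff (e3 2 1 2) P) + (monomial (e3 1 4 0)) (coeff (e3 1 4 0) P) + (monomial (e3 1 0 4)) (coeff (e3 1 0 4) P) + (monomial (e3 1 3 1)) (coeff (e3 1 3 1) P) + (monomial (e3 1 1 3)) (coeff (e3 1 1 3) P) + (monomial (e3 1 2 2)) (coeff (e3 1 2 2) P) + (monomial (e3 0 5 0)) (coeff (e3 0 5 0) P) + (monomial (e3 0 0 5)) (coeff (e3 0 0 5) P) + (monomial (e3 0 4 1)) (coeff (e3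 0 4 1) P) + (monomial (e3 0 1 4)) (coeff (e3 0 1 4) P) + (monomial (e3 0 3 2)) (coeff (e3 0 3 2) P) + (monomial (e3 0 2 3)) (coeff (e3 0 2 3) P) := by
      conv_lhs => rw [hP1]
      simp only [T21]
      repeat rw [Finset.sum_insert (by decide)]
      rw [Finset.sum_singleton]
      norm_num
      simp only [← add_assoc]
    set c500 : F := coeff (e3 5 0 0) P with hdefc500
    set c410 : F := coeff (e3 4 1 0) P with hdefc410
    set c401 : F := coeff (e3 4 0 1) P with hdefc401
    set c320 : F := coeff (e3 3 2 0) P with hdefc320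
    set c302 : F := coeff (e3 3 0 2) P with hdefc302
    set c311 : F := coeff (e3 3 1 1) P with hdefc311
    set c230 : F := coeff (e3 2 3 0) P with hdefc230
    set c203 : F := coeff (e3 2 0 3) P with hdefc203
    set c221 : F := coeff (e3 2 2 1) P with hdefc221
    set c212 : F := coeff (e3 2 1 2) P with hdefc212
    set c140 : F := coeff (e3 1 4 0) P with hdefc140
    set c104 : F := coeff (e3 1 0 4) P with hdefc104
    set c131 : F := coeff (e3 1 3 1) P with hdefc131
    set c113 : F := coeff (e3 1 1 3) P with hdefc113
    set c122 : F := coeff (e3 1 2 2) P with hdefc122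
    set c050 : F := coeff (e3 0 5 0) P with hdefc050
    set c005 : F := coeff (e3 0 0 5) P with hdefc005
    set c041 : F := coeff (e3 0 4 1) P with hdefc041
    set c014 : F := coeff (e3 0 1 4) P with hdefc014
    set c032 : F := coeff (e3 0 3 2) P with hdefc032
    set c023 : F := coeff (e3 0 2 3) P with hdefc023
    have H : ∀ x y z : F, c500 * (x^5 * y^0 * z^0) + c410 * (x^4 * y^1 * z^0) + c401 * (x^4 * y^0 * z^1) + c320 * (x^3 * y^2 * z^0) + c302 * (x^3 * y^0 * z^2) + c311 * (x^3 * y^1 * z^1) + c230 * (x^2 * y^3 * z^0) + c203 * (x^2 * y^0 * z^3) + c221 * (x^2 * y^2 * z^1) + c212 * (x^2 * y^1 * z^2) + c140 * (x^1 * y^4 * z^0) + c104 * (x^1 * y^0 * z^4) + c131 * (x^1 * y^3 * z^1) + c113 * (x^1 * y^1 * z^3) + c122 * (x^1 * y^2 * z^2) + c050 * (x^0 * y^5 * z^0) + c005 * (x^0 * y^0 * z^5) + c041 * (x^0 * y^4 * z^1) + c014 * (x^0 * y^1 * z^4) + c032 * (x^0 * y^3 * z^2) + c023 * (x^0 * y^2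 * z^3) = 0 := by
      intro x y z
      have hv := h ![x, y, z]
      rw [hP2] at hv
      rw [← hv]
      simp only [map_add, eval_monomial_e3]
    have h500 : c500 = 0 := by
      linear_combination (norm := ring1) H 1 0 0 + (0) * hw + (0) * h2
    have h050 : c050 = 0 := by
      linear_combination (norm := ring1) H 0 1 0 + (0) * hw + (0) * h2
    have h005 : c005 = 0 := by
      linear_combination (norm := ring1) H 0 0 1 + (0) * hw + (0) * h2
    have h320 : c320 = 0 := by
      linear_combination (norm := ring1) H 0 1 0 + H 1 1 0 + ω * (H 1 ω 0) + (1+ω) * (H 1 (1+ω) 0) + (((-2))*c410 + ((-5) + (-2)*ω)*c320 + ((-14) + (-6)*ω + (-2)*ω^2)*c230 + ((-36) + (-19)*ω + (-7)*ω^2 + (-2)*ω^3)*c140 + ((-93) + (-53)*ω + (-25)*ω^2 + (-8)*ω^3 + (-2)*ω^4)*c050) * hw + (((-1) + (-1)*ω)*c500 + ((-2) + (-2)*ω)*c410 + ((-3) + (-5)*ω)*c320 + ((-8) + (-12)*ω)*c230 + ((-19) + (-30)*ω)*c140 + ((-48) + (-76)*ω)*c050) * h2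
    have h230 : c230 = 0 := by
      linear_combination (norm := ring1) H 1 0 0 + H 1 1 0 + H 1 ω 0 + H 1 (1+ω) 0 + (((-2))*c320 + ((-5) + (-2)*ω)*c230 + ((-14) + (-6)*ω + (-2)*ω^2)*c140 + ((-36) + (-19)*ω + (-7)*ω^2 + (-2)*ω^3)*c050) * hw + (((-2))*c500 + ((-1) + (-1)*ω)*c410 + ((-2) + (-2)*ω)*c320 + ((-3) + (-5)*ω)*c230 + ((-8) + (-12)*ω)*c140 + ((-19) + (-30)*ω)*c050) * h2
    have h302 : c302 = 0 := by
      linear_combination (norm := ring1) H 0 0 1 + H 1 0 1 + ω * (H 1 0 ω) + (1+ω) * (H 1 0 (1+ω)) + (((-2))*c401 + ((-5) + (-2)*ω)*c302 + ((-14) + (-6)*ω + (-2)*ω^2)*c203 + ((-36) + (-19)*ω + (-7)*ω^2 + (-2)*ω^3)*c104 + ((-93) + (-53)*ω + (-25)*ω^2 + (-8)*ω^3 + (-2)*ω^4)*c005) * hw + (((-1) + (-1)*ω)*c500 + ((-2) + (-2)*ω)*c401 + ((-3) + (-5)*ω)*c302 + ((-8) + (-12)*ω)*c203 + ((-19) +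 (-30)*ω)*c104 + ((-48) + (-76)*ω)*c005) * h2
    have h203 : c203 = 0 := by
      linear_combination (norm := ring1) H 1 0 0 + H 1 0 1 + H 1 0 ω + H 1 0 (1+ω) + (((-2))*c302 + ((-5) + (-2)*ω)*c203 + ((-14) + (-6)*ω + (-2)*ω^2)*c104 + ((-36) + (-19)*ω + (-7)*ω^2 + (-2)*ω^3)*c005) * hw + (((-2))*c500 + ((-1) + (-1)*ω)*c401 + ((-2) + (-2)*ω)*c302 + ((-3) + (-5)*ω)*c203 + ((-8) + (-12)*ω)*c104 + ((-19) + (-30)*ω)*c005) * h2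
    have h032 : c032 = 0 := by
      linear_combination (norm := ring1) H 0 0 1 + H 0 1 1 + ω * (H 0 1 ω) + (1+ω) * (H 0 1 (1+ω)) + (((-93) + (-53)*ω + (-25)*ω^2 + (-8)*ω^3 + (-2)*ω^4)*c005 + ((-2))*c041 + ((-36) + (-19)*ω + (-7)*ω^2 + (-2)*ω^3)*c014 + ((-5) + (-2)*ω)*c032 + ((-14) + (-6)*ω + (-2)*ω^2)*c023) * hw + (((-1) + (-1)*ω)*c050 + ((-48) + (-76)*ω)*c005 + ((-2) + (-2)*ω)*c041 + ((-19) + (-30)*ω)*c014 + ((-3) + (-5)*ω)*c032 + ((-8) + (-12)*ω)*c023) * h2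
    have h023 : c023 = 0 := by
      linear_combination (norm := ring1) H 0 1 0 + H 0 1 1 + H 0 1 ω + H 0 1 (1+ω) + (((-36) + (-19)*ω + (-7)*ω^2 + (-2)*ω^3)*c005 + ((-14) + (-6)*ω + (-2)*ω^2)*c014 + ((-2))*c032 + ((-5) + (-2)*ω)*c023) * hw + (((-2))*c050 + ((-19) + (-30)*ω)*c005 + ((-1) + (-1)*ω)*c041 + ((-8) + (-12)*ω)*c014 + ((-2) + (-2)*ω)*c032 + ((-3) + (-5)*ω)*c023) * h2
    have h311 : c311 = 0 := by
      linear_combination (norm := ring1) ω * (H 0 0 1) + ω * (H 0 1 0) + H 0 1 1 + ω * (H 0 1 ω) + H 0 1 (1+ω) + (1+ω) * (H 1 0 0) + H 1 0 1 + ω * (H 1 0 (1+ω)) + H 1 1 0 + ω * (H 1 1 1) + H 1 1 ω + ω * (H 1 1 (1+ω)) + H 1 ω 1 + H 1 ω ω + ω * (H 1 (1+ω) 0) + ω * (H 1 (1+ω) 1) + (((-2))*c410 + ((-2))*c401 + ((-8) + (-2)*ω)*c320 + ((-8) + (-2)*ω)*c302 + ((-3))*c311 + ((-18) + (-10)*ω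 + (-2)*ω^2)*c230 + ((-18) + (-10)*ω + (-2)*ω^2)*c203 + ((-6) + (-2)*ω)*c221 + ((-6) + (-2)*ω)*c212 + ((-46) + (-26)*ω + (-12)*ω^2 + (-2)*ω^3)*c140 + ((-46) + (-26)*ω + (-12)*ω^2 + (-2)*ω^3)*c104 + ((-12) + (-6)*ω + (-2)*ω^2)*c131 + ((-12) + (-6)*ω + (-2)*ω^2)*c113 + ((-10) + (-3)*ω + (-1)*ω^2)*c122 + ((-116) + (-70)*ω + (-36)*ω^2 + (-14)*ω^3 + (-2)*ω^4)*c050 + ((-154) + (-90)*ω + (-44)*ω^2 + (-16)*ω^3 + (-3)*ω^4)*c005 + ((-28) + (-15)*ω + (-7)*ω^2 + (-2)*ω^3)*c041 + ((-42) + (-22)*ω + (-9)*ω^2 + (-3)*ω^3)*c014 + ((-18) + (-9)*ω + (-2)*ω^2 + (-1)*ω^3)*c032 + ((-22) + (-10)*ω + (-3)*ω^2 + (-1)*ω^3)*c023) * hw + (((-3) + (-3)*ω)*c500 + ((-2) + (-4)*ω)*c410 + ((-2) + (-4)*ω)*c401 + ((-5) + (-7)*ω)*c320 + ((-5) + (-7)*ω)*c302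 + ((-1) + (-4)*ω)*c311 + ((-10) + (-16)*ω)*c230 + ((-10) + (-16)*ω)*c203 + ((-3) + (-6)*ω)*c221 + ((-3) + (-6)*ω)*c212 + ((-24) + (-38)*ω)*c140 + ((-24) + (-38)*ω)*c104 + ((-6) + (-11)*ω)*c131 + ((-6) + (-11)*ω)*c113 + ((-5) + (-8)*ω)*c122 + ((-60) + (-96)*ω)*c050 + ((-79) + (-127)*ω)*c005 + ((-15) + (-24)*ω)*c041 + ((-22) + (-36)*ω)*c014 + ((-10) + (-16)*ω)*c032 + ((-12) + (-19)*ω)*c023) * h2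
    have h131 : c131 = 0 := by
      linear_combination (norm := ring1) H 0 0 1 + H 0 1 1 + ω * (H 0 1 ω) + (1+ω) * (H 0 1 (1+ω)) + H 1 0 0 + H 1 0 1 + H 1 1 0 + H 1 1 1 + H 1 ω 0 + H 1 ω 1 + H 1 (1+ω) 0 + H 1 (1+ω) 1 + (((-4))*c320 + ((-10) + (-4)*ω)*c230 + ((-2))*c221 + ((-28) + (-12)*ω + (-4)*ω^2)*c140 + ((-5) + (-2)*ω)*c131 + ((-2))*c122 + ((-72) + (-38)*ω + (-14)*ω^2 + (-4)*ω^3)*c050 + ((-93) + (-53)*ω + (-25)*ω^2 + (-8)*ω^3 + (-2)*ω^4)*c005 + ((-16) + (-6)*ω + (-2)*ω^2)*c041 + ((-36) + (-19)*ω + (-7)*ω^2 + (-2)*ω^3)*c014 + ((-10) + (-4)*ω)*c032 + ((-16) + (-6)*ω + (-2)*ω^2)*c023) * hw + (((-4))*c500 + ((-2) + (-2)*ω)*c410 + ((-2))*c401 + ((-4) + (-4)*ω)*c320 + ((-2))*c302 + ((-1) + (-1)*ω)*c311 + ((-7) + (-10)*ω)*c230 + ((-2))*c203 + ((-2) + (-2)*ω)*c221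 + ((-1) + (-1)*ω)*c212 + ((-16) + (-24)*ω)*c140 + ((-2))*c104 + ((-3) + (-5)*ω)*c131 + ((-1) + (-1)*ω)*c113 + ((-2) + (-2)*ω)*c122 + ((-39) + (-61)*ω)*c050 + ((-50) + (-76)*ω)*c005 + ((-10) + (-14)*ω)*c041 + ((-20) + (-31)*ω)*c014 + ((-7) + (-10)*ω)*c032 + ((-10) + (-14)*ω)*c023) * h2
    have h113 : c113 = 0 := by
      linear_combination (norm := ring1) H 0 1 0 + H 0 1 1 + H 0 1 ω + H 0 1 (1+ω) + H 1 0 0 + H 1 0 1 + H 1 0 ω + H 1 0 (1+ω) + H 1 1 0 + H 1 1 1 + H 1 1 ω + H 1 1 (1+ω) + (((-4))*c302 + ((-10) + (-4)*ω)*c203 + ((-2))*c212 + ((-28) + (-12)*ω + (-4)*ω^2)*c104 + ((-5) + (-2)*ω)*c113 + ((-2))*c122 + ((-108) + (-57)*ω + (-21)*ω^2 + (-6)*ω^3)*c005 + ((-28) + (-12)*ω + (-4)*ω^2)*c014 + ((-4))*c032 + ((-10) + (-4)*ω)*c023) * hw + (((-4))*c500 + ((-2))*c410 + ((-2) + (-2)*ω)*c401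 + ((-2))*c320 + ((-4) + (-4)*ω)*c302 + ((-1) + (-1)*ω)*c311 + ((-2))*c230 + ((-7) + (-10)*ω)*c203 + ((-1) + (-1)*ω)*c221 + ((-2) + (-2)*ω)*c212 + ((-2))*c140 + ((-16) + (-24)*ω)*c104 + ((-1) + (-1)*ω)*c131 + ((-3) + (-5)*ω)*c113 + ((-2) + (-2)*ω)*c122 + ((-4))*c050 + ((-57) + (-90)*ω)*c005 + ((-2) + (-2)*ω)*c041 + ((-16) + (-24)*ω)*c014 + ((-4) + (-4)*ω)*c032 + ((-7) + (-10)*ω)*c023) * h2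
    have h221 : c221 = 0 := by
      linear_combination (norm := ring1) (1+ω) * (H 0 0 1) + ω * (H 0 1 0) + H 0 1 1 + (1+ω) * (H 0 1 ω) + ω * (H 1 0 0) + H 1 0 1 + (1+ω) * (H 1 0 ω) + ω * (H 1 1 1) + ω * (H 1 1 ω) + H 1 ω 0 + H 1 ω ω + (1+ω) * (H 1 (1+ω) 0) + (1+ω) * (H 1 (1+ω) 1) + (((-2))*c410 + ((-2))*c401 + ((-10) + (-2)*ω)*c320 + ((-4) + (-2)*ω)*c302 + ((-3))*c311 + ((-26) + (-12)*ω + (-2)*ω^2)*c230 + ((-6) + (-4)*ω + (-2)*ω^2)*c203 + ((-6) + (-2)*ω)*c221 + ((-3) + (-2)*ω)*c212 + ((-70) + (-36)*ω + (-14)*ω^2 + (-2)*ω^3)*c140 + ((-10) + (-6)*ω + (-4)*ω^2 + (-2)*ω^3)*c104 + ((-15) + (-6)*ω + (-2)*ω^2)*c131 + ((-5) + (-2)*ω + (-2)*ω^2)*c113 + ((-7) + (-3)*ω + (-1)*ω^2)*c122 + ((-182) + (-104)*ω + (-48)*ω^2 + (-16)*ω^3 + (-2)*ω^4)*c050 +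 ((-24) + (-15)*ω + (-9)*ω^2 + (-6)*ω^3 + (-3)*ω^4)*c005 + ((-38) + (-19)*ω + (-7)*ω^2 + (-2)*ω^3)*c041 + ((-12) + (-7)*ω + (-4)*ω^2 + (-3)*ω^3)*c014 + ((-18) + (-9)*ω + (-2)*ω^2 + (-1)*ω^3)*c032 + ((-12) + (-6)*ω + (-3)*ω^2 + (-1)*ω^3)*c023) * hw + (((-3) + (-3)*ω)*c500 + ((-2) + (-5)*ω)*c410 + ((-2) + (-3)*ω)*c401 + ((-6) + (-10)*ω)*c320 + ((-3) + (-4)*ω)*c302 + ((-2) + (-3)*ω)*c311 + ((-14) + (-24)*ω)*c230 + ((-4) + (-6)*ω)*c203 + ((-3) + (-6)*ω)*c221 + ((-2) + (-4)*ω)*c212 + ((-36) + (-59)*ω)*c140 + ((-6) + (-9)*ω)*c104 + ((-8) + (-13)*ω)*c131 + ((-3) + (-5)*ω)*c113 + ((-4) + (-7)*ω)*c122 + ((-93) + (-151)*ω)*c050 + ((-14) + (-21)*ω)*c005 + ((-20) + (-32)*ω)*c041 + ((-7) + (-11)*ω)*c014 + ((-10) + (-16)*ω)*c032 + ((-7)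 + (-11)*ω)*c023) * h2
    have h212 : c212 = 0 := by
      linear_combination (norm := ring1) ω * (H 0 0 1) + (1+ω) * (H 0 1 0) + H 0 1 1 + ω * (H 0 1 (1+ω)) + ω * (H 1 0 0) + H 1 0 ω + (1+ω) * (H 1 0 (1+ω)) + H 1 1 0 + ω * (H 1 1 1) + (1+ω) * (H 1 1 (1+ω)) + (1+ω) * (H 1 ω 0) + ω * (H 1 ω 1) + H 1 ω ω + (((-2))*c410 + ((-2))*c401 + ((-4) + (-2)*ω)*c320 + ((-10) + (-2)*ω)*c302 + ((-3))*c311 + ((-6) + (-4)*ω + (-2)*ω^2)*c230 + ((-26) + (-12)*ω + (-2)*ω^2)*c203 + ((-3) + (-2)*ω)*c221 + ((-6) + (-2)*ω)*c212 + ((-10) + (-6)*ω + (-4)*ω^2 + (-2)*ω^3)*c140 + ((-70) + (-36)*ω + (-14)*ω^2 + (-2)*ω^3)*c104 + ((-5) + (-2)*ω + (-2)*ω^2)*c131 + ((-15) + (-6)*ω + (-2)*ω^2)*c113 + ((-7) + (-3)*ω + (-1)*ω^2)*c122 + ((-16) + (-10)*ω + (-6)*ω^2 + (-4)*ω^3 +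 (-2)*ω^4)*c050 + ((-237) + (-137)*ω + (-65)*ω^2 + (-22)*ω^3 + (-3)*ω^4)*c005 + ((-8) + (-4)*ω + (-2)*ω^2 + (-2)*ω^3)*c041 + ((-58) + (-31)*ω + (-12)*ω^2 + (-3)*ω^3)*c014 + ((-12) + (-5)*ω + (-2)*ω^2 + (-1)*ω^3)*c032 + ((-24) + (-12)*ω + (-3)*ω^2 + (-1)*ω^3)*c023) * hw + (((-3) + (-3)*ω)*c500 + ((-2) + (-3)*ω)*c410 + ((-2) + (-5)*ω)*c401 + ((-3) + (-4)*ω)*c320 + ((-6) + (-10)*ω)*c302 + ((-2) + (-3)*ω)*c311 + ((-4) + (-6)*ω)*c230 + ((-14) + (-24)*ω)*c203 + ((-2) + (-4)*ω)*c221 + ((-3) + (-6)*ω)*c212 + ((-6) + (-9)*ω)*c140 + ((-36) + (-59)*ω)*c104 + ((-3) + (-5)*ω)*c131 + ((-8) + (-13)*ω)*c113 + ((-4) + (-7)*ω)*c122 + ((-10) + (-15)*ω)*c050 + ((-120) + (-195)*ω)*c005 + ((-5) + (-8)*ω)*c041 + ((-30) + (-48)*ω)*c014 + ((-7) + (-11)*ω)*c032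 + ((-13) + (-21)*ω)*c023) * h2
    have h122 : c122 = 0 := by
      linear_combination (norm := ring1) (1+ω) * (H 0 0 1) + (1+ω) * (H 0 1 0) + ω * (H 0 1 ω) + H 0 1 (1+ω) + ω * (H 1 0 0) + H 1 0 1 + (1+ω) * (H 1 0 ω) + H 1 1 0 + (1+ω) * (H 1 1 1) + ω * (H 1 1 ω) + (1+ω) * (H 1 ω 0) + ω * (H 1 ω 1) + H 1 ω ω + (((-2))*c410 + ((-2))*c401 + ((-4) + (-2)*ω)*c320 + ((-4) + (-2)*ω)*c302 + ((-3))*c311 + ((-6) + (-4)*ω + (-2)*ω^2)*c230 + ((-6) + (-4)*ω + (-2)*ω^2)*c203 + ((-3) + (-2)*ω)*c221 + ((-3) + (-2)*ω)*c212 + ((-10) + (-6)*ω + (-4)*ω^2 + (-2)*ω^3)*c140 + ((-10) + (-6)*ω + (-4)*ω^2 + (-2)*ω^3)*c104 + ((-5) + (-2)*ω + (-2)*ω^2)*c131 + ((-5) + (-2)*ω + (-2)*ω^2)*c113 + ((-4) + (-3)*ω + (-1)*ω^2)*c122 + ((-16) + (-10)*ω + (-6)*ω^2 + (-4)*ω^3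 + (-2)*ω^4)*c050 + ((-54) + (-30)*ω + (-14)*ω^2 + (-6)*ω^3 + (-3)*ω^4)*c005 + ((-8) + (-4)*ω + (-2)*ω^2 + (-2)*ω^3)*c041 + ((-22) + (-11)*ω + (-4)*ω^2 + (-3)*ω^3)*c014 + ((-8) + (-5)*ω + (-2)*ω^2 + (-1)*ω^3)*c032 + ((-12) + (-6)*ω + (-3)*ω^2 + (-1)*ω^3)*c023) * hw + (((-3) + (-3)*ω)*c500 + ((-2) + (-3)*ω)*c410 + ((-2) + (-3)*ω)*c401 + ((-3) + (-4)*ω)*c320 + ((-3) + (-4)*ω)*c302 + ((-2) + (-2)*ω)*c311 + ((-4) + (-6)*ω)*c230 + ((-4) + (-6)*ω)*c203 + ((-2) + (-3)*ω)*c221 + ((-2) + (-3)*ω)*c212 + ((-6) + (-9)*ω)*c140 + ((-6) + (-9)*ω)*c104 + ((-3) + (-4)*ω)*c131 + ((-3) + (-4)*ω)*c113 + ((-2) + (-4)*ω)*c122 + ((-10) + (-15)*ω)*c050 + ((-29) + (-46)*ω)*c005 + ((-5) + (-7)*ω)*c041 + ((-12) + (-19)*ω)*c014 + ((-5) + (-8)*ω)*c032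 + ((-7) + (-11)*ω)*c023) * h2
    have h410_140 : c410 + c140 = 0 := by
      linear_combination (norm := ring1) H 1 1 0 + (1+ω) * (H 1 ω 0) + ω * (H 1 (1+ω) 0) + (((-2))*c410 + ((-5) + (-2)*ω)*c320 + ((-11) + (-6)*ω + (-2)*ω^2)*c230 + ((-26) + (-15)*ω + (-7)*ω^2 + (-2)*ω^3)*c140 + ((-63) + (-38)*ω + (-20)*ω^2 + (-8)*ω^3 + (-2)*ω^4)*c050) * hw + (((-1) + (-1)*ω)*c500 + ((-1) + (-2)*ω)*c410 + ((-3) + (-4)*ω)*c320 + ((-6) + (-9)*ω)*c230 + ((-13) + (-21)*ω)*c140 + ((-32) + (-51)*ω)*c050) * h2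
    have h401_104 : c401 + c104 = 0 := by
      linear_combination (norm := ring1) H 1 0 1 + (1+ω) * (H 1 0 ω) + ω * (H 1 0 (1+ω)) + (((-2))*c401 + ((-5) + (-2)*ω)*c302 + ((-11) + (-6)*ω + (-2)*ω^2)*c203 + ((-26) + (-15)*ω + (-7)*ω^2 + (-2)*ω^3)*c104 + ((-63) + (-38)*ω + (-20)*ω^2 + (-8)*ω^3 + (-2)*ω^4)*c005) * hw + (((-1) + (-1)*ω)*c500 + ((-1) + (-2)*ω)*c401 + ((-3) + (-4)*ω)*c302 + ((-6) + (-9)*ω)*c203 + ((-13) + (-21)*ω)*c104 + ((-32) + (-51)*ω)*c005) * h2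
    have h041_014 : c041 + c014 = 0 := by
      linear_combination (norm := ring1) H 0 1 1 + (1+ω) * (H 0 1 ω) + ω * (H 0 1 (1+ω)) + (((-63) + (-38)*ω + (-20)*ω^2 + (-8)*ω^3 + (-2)*ω^4)*c005 + ((-2))*c041 + ((-26) + (-15)*ω + (-7)*ω^2 + (-2)*ω^3)*c014 + ((-5) + (-2)*ω)*c032 + ((-11) + (-6)*ω + (-2)*ω^2)*c023) * hw + (((-1) + (-1)*ω)*c050 + ((-32) + (-51)*ω)*c005 + ((-1) + (-2)*ω)*c041 + ((-13) + (-21)*ω)*c014 + ((-3) + (-4)*ω)*c032 + ((-6) + (-9)*ω)*c023) * h2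
    have hq1 : c140 = c410 := by linear_combination h410_140 - c410 * h2
    have hq2 : c104 = c401 := by linear_combination h401_104 - c401 * h2
    have hq3 : c014 = c041 := by linear_combination h041_014 - c041 * h2
    have hrep : P = c410 • (X 0 ^ 4 * X 1 + X 0 * X 1 ^ 4) +
        c401 • (X 0 ^ 4 * X 2 + X 0 * X 2 ^ 4) + c041 • (X 1 ^ 4 * X 2 + X 1 * X 2 ^ 4) := by
      rw [hP2, h500, h050, h005, h320, h230, h302, h203, h032, h023, h311, h131, h113,
        h221, h212, h122, hq1, hq2, hq3]
      simp only [monomial_zero, monomial_e3, smul_eq_C_mul]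
      ring
    rw [hrep]
    refine Submodule.add_mem _ (Submodule.add_mem _ ?_ ?_) ?_ <;>
      exact Submodule.smul_mem _ _ (Submodule.subset_span (by simp))
  · intro hmem
    induction hmem using Submodule.span_induction with
    | mem p hp =>
      have hvan : ∀ (i j : Fin 3) (v : Fin 3 → F), eval v (X i ^ 4 * X j + X i * X j ^ 4) = 0 := by
        intro i j v
        simp only [map_add, map_mul, map_pow, eval_X]
        linear_combination (v j) * hx4 (v i) + (v i) * hx4 (v j) + (v i * v j) * h2
      have hhom : ∀ i j : Fin 3,
          (X i ^ 4 * X j + X i * X j ^ 4 : MvPolynomial (Fin 3) F).IsHomogeneous 5 := by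
        intro i j
        have h1 : (X i ^ 4 * X j : MvPolynomial (Fin 3) F).IsHomogeneous 5 := by
          have := (isHomogeneous_X_pow i 4).mul (isHomogeneous_X F j)
          simpa using this
        have h2 : (X i * X j ^ 4 : MvPolynomial (Fin 3) F).IsHomogeneous 5 := by
          have := (isHomogeneous_X F i).mul (isHomogeneous_X_pow j 4)
          simpa using this
        exact h1.add h2
      rcases hp with h | h | h <;> subst h <;> exact ⟨hhom _ _, hvan _ _⟩
    | zero => exact ⟨isHomogeneous_zero _ _ _, by simp⟩
    | add x y hx hy hx' hy' =>
      exact ⟨hx'.1.add hy'.1, fun v => by rw [map_add, hx'.2 v, hy'.2 v, add_zero]⟩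
    | smul a x hx hx' =>
      refine ⟨?_, fun v => by rw [smul_eq_C_mul, map_mul, eval_C, hx'.2 v, mul_zero]⟩
      rw [smul_eq_C_mul]
      simpa using (isHomogeneous_C _ a).mul hx'.1
end

section
/- Let S be a 5-element subset of ℙ²(𝔽₄) such that no three points of S are collinear. Then there is exactly 1 point p ∈ ℙ²(𝔽₄) \ S such that no three points of S ∪ {p} are collinear. -/
/-!
Projective automorphisms act transitively on frames (four points, no three collinear), so we
may assume that `S` is the standard frame `[1:0:0], [0:1:0], [0:0:1], [1:1:1]` together with a
fifth point `x`. A point lies on none of the six lines joining two frame points iff it is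
`[1:y:z]` with `y, z ∉ {0, 1}` and `y ≠ z`. Over `𝔽₄` this forces `y` and `z` to be the two roots
of `t² + t + 1`, so there are exactly two such points, `[1:ω:ω²]` and `[1:ω²:ω]`. Hence `x` is one
of them, every extension point is the other one, and a determinant computation shows that the
other one does extend `S`.
-/

open scoped LinearAlgebra.Projectivization

/-- No three distinct points of `S ⊆ ℙ²(𝔽₄)` are collinear (i.e. have linearly dependent
representative vectors). -/
def NoThreeCollinear (S : Set (ℙ (GaloisField 2 2) (Fin 3 → GaloisField 2 2))) : Prop :=
  ∀ p ∈ S, ∀ q ∈ S, ∀ r ∈ S, p ≠ q → p ≠ r → q ≠ r → ¬ Projectivization.Dependent ![p, q, r]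

open scoped Pointwise

namespace Projectivization

section DivisionRing
variable {ι K V : Type*} [DivisionRing K] [AddCommGroup V] [Module K V]

theorem dependent_mk_iff (v : ι → V) (hv : ∀ i, v i ≠ 0) :
    Dependent (fun i => mk K (v i) (hv i)) ↔ ¬LinearIndependent K v := by
  refine ⟨?_, Dependent.mk v hv⟩
  rw [dependent_iff]
  choose a ha using fun i => exists_smul_eq_mk_rep K (v i) (hv i)
  refine mt fun hli => ?_
  convert hli.units_smul a using 1
  ext i
  exact (ha i).symm

theorem dependent_comp_perm (f : ι → ℙ K V) (σ : Equiv.Perm ι) :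
    Dependent (f ∘ σ) ↔ Dependent f := by
  rw [dependent_iff, dependent_iff, ← Function.comp_assoc, linearIndependent_equiv]

theorem dependent_of_not_injective {f : ι → ℙ K V} (hf : ¬f.Injective) : Dependent f :=
  dependent_iff.2 fun hli => hf (hli.injective.of_comp)

theorem dependent_swap_left (p q r : ℙ K V) : Dependent ![q, p, r] ↔ Dependent ![p, q, r] := by
  convert dependent_comp_perm ![p, q, r] (Equiv.swap 0 1) using 2
  ext i; fin_cases i <;> rfl

theorem dependent_swap_right (p q r : ℙ K V) : Dependent ![p, r, q] ↔ Dependent ![p, q, r] := by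
  convert dependent_comp_perm ![p, q, r] (Equiv.swap 1 2) using 2
  ext i; fin_cases i <;> rfl

theorem dependent_of_first_eq_third (p q : ℙ K V) : Dependent ![p, q, p] :=
  dependent_of_not_injective fun h => by simpa using @h 0 2 rfl

theorem dependent_smul_iff (g : V ≃ₗ[K] V) (f : ι → ℙ K V) :
    Dependent (fun i => g • f i) ↔ Dependent f := by
  have hf : f = fun i => mk K (f i).rep (f i).rep_nonzero := funext fun i => (mk_rep _).symm
  rw [hf]
  simp only [smul_mk]
  rw [dependent_mk_iff, dependent_mk_iff]
  exact not_congr (g.toLinearMap.linearIndependent_iff_of_injOn g.injective.injOn)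

theorem mk_smul_eq_mk {c : K} {v : V} (hcv : c • v ≠ 0) :
    mk K (c • v) hcv = mk K v (right_ne_zero_of_smul hcv) :=
  (mk_eq_mk_iff' K _ _ _ _).2 ⟨c, rfl⟩

def IsArc (S : Set (ℙ K V)) : Prop :=
  ∀ p ∈ S, ∀ q ∈ S, ∀ r ∈ S, p ≠ q → p ≠ r → q ≠ r → ¬Dependent ![p, q, r]

def offSecants (S : Set (ℙ K V)) : Set (ℙ K V) :=
  {p | ∀ q ∈ S, ∀ r ∈ S, q ≠ r → ¬Dependent ![q, r, p]}

def arcExtensions (S : Set (ℙ K V)) : Set (ℙ K V) :=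
  {p | p ∉ S ∧ IsArc (insert p S)}

theorem IsArc.mono {S T : Set (ℙ K V)} (hT : IsArc T) (hST : S ⊆ T) : IsArc S :=
  fun p hp q hq r hr => hT p (hST hp) q (hST hq) r (hST hr)

theorem offSecants_anti {S T : Set (ℙ K V)} (hST : S ⊆ T) : offSecants T ⊆ offSecants S :=
  fun _ hp q hq r hr => hp q (hST hq) r (hST hr)

theorem notMem_of_mem_offSecants {S : Set (ℙ K V)} {p q r : ℙ K V} (hq : q ∈ S) (hr : r ∈ S)
    (hqr : q ≠ r) (hp : p ∈ offSecants S) : p ∉ S := by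
  intro hpS
  obtain rfl | hpq := eq_or_ne p q
  · exact hp p hpS r hr hqr (dependent_of_first_eq_third p r)
  · exact hp p hpS q hq hpq (dependent_of_first_eq_third p q)

theorem isArc_insert_iff {S : Set (ℙ K V)} {p : ℙ K V} (hp : p ∉ S) :
    IsArc (insert p S) ↔ IsArc S ∧ p ∈ offSecants S := by
  refine ⟨fun h => ⟨h.mono (Set.subset_insert p S), fun q hq r hr hqr => ?_⟩, ?_⟩
  · exact h q (.inr hq) r (.inr hr) p (.inl rfl) hqr (ne_of_mem_of_not_mem hq hp)
      (ne_of_mem_of_not_mem hr hp)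
  rintro ⟨hS, hpS⟩ a ha b hb c hc hab hac hbc
  rcases ha with rfl | ha <;> rcases hb with rfl | hb <;> rcases hc with rfl | hc
  all_goals first
    | contradiction
    | exact hS _ ha _ hb _ hc hab hac hbc
    | skip
  · rw [← dependent_swap_left, ← dependent_swap_right]; exact hpS _ hb _ hc hbc
  · rw [← dependent_swap_right]; exact hpS _ ha _ hc hac
  · exact hpS _ ha _ hb hab

theorem IsArc.smul {S : Set (ℙ K V)} (hS : IsArc S) (g : V ≃ₗ[K] V) : IsArc (g • S) := by
  rintro _ ⟨p, hp, rfl⟩ _ ⟨q, hq, rfl⟩ _ ⟨r, hr, rfl⟩ hpq hpr hqr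
  have hg : ![g • p, g • q, g • r] = fun i => g • ![p, q, r] i := by
    ext i; fin_cases i <;> rfl
  rw [hg, dependent_smul_iff]
  exact hS p hp q hq r hr (ne_of_apply_ne _ hpq) (ne_of_apply_ne _ hpr) (ne_of_apply_ne _ hqr)

theorem isArc_smul_iff (g : V ≃ₗ[K] V) {S : Set (ℙ K V)} : IsArc (g • S) ↔ IsArc S :=
  ⟨fun h => by simpa using h.smul g⁻¹, fun h => h.smul g⟩

theorem arcExtensions_smul (g : V ≃ₗ[K] V) (S : Set (ℙ K V)) :
    arcExtensions (g • S) = g • arcExtensions S := by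
  ext p
  simp only [arcExtensions, Set.mem_smul_set_iff_inv_smul_mem, Set.mem_ofPred_eq]
  rw [← isArc_smul_iff g (S := insert (g⁻¹ • p) S), Set.smul_set_insert, smul_inv_smul]

end DivisionRing

section Plane
variable {K : Type*} [Field K]

theorem not_linearIndependent_iff_det (u v w : Fin 3 → K) :
    ¬LinearIndependent K ![u, v, w] ↔ (Matrix.of ![u, v, w]).det = 0 := by
  rw [← isUnit_iff_ne_zero.not_left, ← Matrix.isUnit_iff_isUnit_det,
    ← Matrix.linearIndependent_rows_iff_isUnit]
  rfl

theorem dependent_three_iff_det (p q r : ℙ K (Fin 3 → K)) :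
    Dependent ![p, q, r] ↔ (Matrix.of ![p.rep, q.rep, r.rep]).det = 0 := by
  have hrep : Projectivization.rep ∘ ![p, q, r] = ![p.rep, q.rep, r.rep] := by
    ext i; fin_cases i <;> rfl
  rw [dependent_iff, hrep, not_linearIndependent_iff_det]

theorem dependent_mk_three_iff_det {u v w : Fin 3 → K} (hu : u ≠ 0) (hv : v ≠ 0) (hw : w ≠ 0) :
    Dependent ![mk K u hu, mk K v hv, mk K w hw] ↔ (Matrix.of ![u, v, w]).det = 0 := by
  have hne : ∀ i, ![u, v, w] i ≠ 0 := by
    intro i; fin_cases i <;> assumption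
  have hmk : ![mk K u hu, mk K v hv, mk K w hw] = fun i => mk K (![u, v, w] i) (hne i) := by
    ext i; fin_cases i <;> rfl
  rw [hmk, dependent_mk_iff, not_linearIndependent_iff_det]

def stdFrame : Set (ℙ K (Fin 3 → K)) :=
  {mk K (Pi.single 0 1) (by simp), mk K (Pi.single 1 1) (by simp),
    mk K (Pi.single 2 1) (by simp), mk K 1 one_ne_zero}

theorem exists_smul_stdFrame {p₀ p₁ p₂ p₃ : ℙ K (Fin 3 → K)}
    (h₀₁₂ : ¬Dependent ![p₀, p₁, p₂]) (h₀₁₃ : ¬Dependent ![p₀, p₁, p₃])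
    (h₀₂₃ : ¬Dependent ![p₀, p₂, p₃]) (h₁₂₃ : ¬Dependent ![p₁, p₂, p₃]) :
    ∃ g : (Fin 3 → K) ≃ₗ[K] (Fin 3 → K), g • stdFrame = {p₀, p₁, p₂, p₃} := by
  set v := ![p₀.rep, p₁.rep, p₂.rep] with hv_def
  have hv : LinearIndependent K v := by
    rwa [dependent_three_iff_det, ← not_linearIndependent_iff_det, not_not] at h₀₁₂
  let b := basisOfLinearIndependentOfCardEqFinrank hv (by simp)
  have hb : ∀ i, b i = v i := by simp [b]
  set c := b.repr p₃.rep
  have hsum : p₃.rep = c 0 • p₀.rep + c 1 • p₁.rep + c 2 • p₂.rep := by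
    conv_lhs => rw [← b.sum_repr p₃.rep]
    rw [Fin.sum_univ_three, hb, hb, hb]
    rfl
  -- `c i = 0` would put `p₃` on the line through the other two of `p₀, p₁, p₂`.
  have hc : ∀ i, c i ≠ 0 := by
    intro i hci
    fin_cases i
    · refine h₁₂₃ ((dependent_three_iff_det _ _ _).2 ?_)
      rw [hsum]; simp [Matrix.det_fin_three, show c 0 = 0 from hci]; ring
    · refine h₀₂₃ ((dependent_three_iff_det _ _ _).2 ?_)
      rw [hsum]; simp [Matrix.det_fin_three, show c 1 = 0 from hci]; ring
    · refine h₀₁₃ ((dependent_three_iff_det _ _ _).2 ?_)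
      rw [hsum]; simp [Matrix.det_fin_three, show c 2 = 0 from hci]; ring
  -- Rescaling the basis `v` by `c` makes `g` send `[1:1:1]` to `p₃`.
  let g := (Pi.basisFun K (Fin 3)).equiv (b.unitsSMul fun i => Units.mk0 (c i) (hc i))
    (Equiv.refl _)
  have hg : ∀ i, g (Pi.single i 1) = c i • v i := fun i => by
    have := (Pi.basisFun K (Fin 3)).equiv_apply i
      (b.unitsSMul fun i => Units.mk0 (c i) (hc i)) (Equiv.refl _)
    rwa [Pi.basisFun_apply, Module.Basis.unitsSMul_apply, hb] at this
  have hg1 : g 1 = p₃.rep := by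
    rw [← Finset.univ_sum_single (1 : Fin 3 → K), map_sum]
    simp [hg, Fin.sum_univ_three, hsum, v]
  refine ⟨g, ?_⟩
  simp only [stdFrame, Set.smul_set_insert, Set.smul_set_singleton, smul_mk,
    LinearEquiv.smul_def, hg, hg1, mk_smul_eq_mk, hv_def, Matrix.cons_val, mk_rep]

theorem mem_offSecants_stdFrame_iff {p : ℙ K (Fin 3 → K)} :
    p ∈ offSecants stdFrame ↔
      ∃ y z : K, y ≠ 0 ∧ y ≠ 1 ∧ z ≠ 0 ∧ z ≠ 1 ∧ y ≠ z ∧ p = mk K ![1, y, z] (by simp) := by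
  constructor
  · induction p using ind with | h w hw =>
    intro hp
    have hdet : ∀ (u v : Fin 3 → K) (hu : u ≠ 0) (hv : v ≠ 0), mk K u hu ∈ stdFrame →
        mk K v hv ∈ stdFrame → mk K u hu ≠ mk K v hv → (Matrix.of ![u, v, w]).det ≠ 0 :=
      fun u v hu hv hu' hv' huv => (dependent_mk_three_iff_det hu hv hw).not.1 (hp _ hu' _ hv' huv)
    obtain ⟨h₀, h₁, h₂, h₀₁, h₀₂, h₁₂⟩ :
        w 0 ≠ 0 ∧ w 1 ≠ 0 ∧ w 2 ≠ 0 ∧ w 0 ≠ w 1 ∧ w 0 ≠ w 2 ∧ w 1 ≠ w 2 := by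
      refine ⟨fun h => hdet (Pi.single 1 1) (Pi.single 2 1) ?_ ?_ ?_ ?_ ?_ ?_,
        fun h => hdet (Pi.single 0 1) (Pi.single 2 1) ?_ ?_ ?_ ?_ ?_ ?_,
        fun h => hdet (Pi.single 0 1) (Pi.single 1 1) ?_ ?_ ?_ ?_ ?_ ?_,
        fun h => hdet (Pi.single 2 1) 1 ?_ ?_ ?_ ?_ ?_ ?_,
        fun h => hdet (Pi.single 1 1) 1 ?_ ?_ ?_ ?_ ?_ ?_,
        fun h => hdet (Pi.single 0 1) 1 ?_ ?_ ?_ ?_ ?_ ?_⟩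
      all_goals first
        | simp [mk_eq_mk_iff', funext_iff, Fin.forall_fin_succ]; done
        | simp [stdFrame]; done
        | simp [Matrix.det_fin_three, h]
    refine ⟨w 1 / w 0, w 2 / w 0, by simp [*], by simp [div_eq_one_iff_eq h₀, Ne.symm h₀₁],
      by simp [*], by simp [div_eq_one_iff_eq h₀, Ne.symm h₀₂], by simp [div_left_inj' h₀, h₁₂],
      (mk_eq_mk_iff' K _ _ _ _).2 ⟨w 0, ?_⟩⟩
    ext i; fin_cases i <;> simp [h₀, mul_div_cancel₀]
  · rintro ⟨y, z, hy₀, hy₁, hz₀, hz₁, hyz, rfl⟩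
    simp only [offSecants, stdFrame, Set.mem_insert_iff, Set.mem_singleton_iff, Set.mem_ofPred_eq]
    rintro q (rfl | rfl | rfl | rfl) r (rfl | rfl | rfl | rfl) hqr
    all_goals first | exact absurd rfl hqr | rw [dependent_mk_three_iff_det]
    all_goals simp [Matrix.det_fin_three]
    all_goals grind

theorem mk_one_eq_mk_one_iff {y z y' z' : K} :
    mk K ![1, y, z] (by simp) = mk K ![1, y', z'] (by simp) ↔ y = y' ∧ z = z' := by
  rw [mk_eq_mk_iff']
  constructor
  · rintro ⟨a, ha⟩
    simp [funext_iff, Fin.forall_fin_succ] at ha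
    grind
  · rintro ⟨rfl, rfl⟩
    exact ⟨1, one_smul K _⟩

theorem exists_eq_smul_insert_stdFrame {S : Finset (ℙ K (Fin 3 → K))} (hcard : S.card = 5)
    (hS : IsArc (S : Set (ℙ K (Fin 3 → K)))) :
    ∃ (g : (Fin 3 → K) ≃ₗ[K] (Fin 3 → K)) (x : ℙ K (Fin 3 → K)),
      x ∉ stdFrame ∧ (S : Set (ℙ K (Fin 3 → K))) = g • insert x stdFrame := by
  classical
  obtain ⟨a, t, hat, hSt, ht⟩ := Finset.card_eq_succ.1 hcard
  obtain ⟨p₃, u, hp₃, rfl, hu⟩ := Finset.card_eq_succ.1 ht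
  obtain ⟨p₀, p₁, p₂, h₀₁, h₀₂, h₁₂, rfl⟩ := Finset.card_eq_three.1 hu
  simp only [Finset.mem_insert, Finset.mem_singleton, not_or] at hat hp₃
  have hF : IsArc ({p₀, p₁, p₂, p₃} : Set _) := hS.mono (by intro q; simp [← hSt]; tauto)
  obtain ⟨g, hg⟩ := exists_smul_stdFrame
    (hF p₀ (by simp) p₁ (by simp) p₂ (by simp) h₀₁ h₀₂ h₁₂)
    (hF p₀ (by simp) p₁ (by simp) p₃ (by simp) h₀₁ (Ne.symm hp₃.1) (Ne.symm hp₃.2.1))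
    (hF p₀ (by simp) p₂ (by simp) p₃ (by simp) h₀₂ (Ne.symm hp₃.1) (Ne.symm hp₃.2.2))
    (hF p₁ (by simp) p₂ (by simp) p₃ (by simp) h₁₂ (Ne.symm hp₃.2.1) (Ne.symm hp₃.2.2))
  refine ⟨g, g⁻¹ • a, ?_, ?_⟩
  · rw [← Set.mem_smul_set_iff_inv_smul_mem, hg]; simp; tauto
  · rw [Set.smul_set_insert, smul_inv_smul, hg, ← hSt]
    ext q; simp; tauto

end Plane

section FourElements
variable {K : Type*} [Field K] [Finite K]

theorem two_eq_zero_of_card_eq_four (hK : Nat.card K = 4) : (2 : K) = 0 := by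
  have := Fintype.ofFinite K
  have h4 : ((2 : K) * 2) = 0 := by
    have := FiniteField.cast_card_eq_zero K
    rw [← Nat.card_eq_fintype_card, hK] at this
    norm_num at this ⊢
    exact this
  exact mul_self_eq_zero.1 h4

theorem sq_add_self_add_one_eq_zero (hK : Nat.card K = 4) {t : K} (h₀ : t ≠ 0) (h₁ : t ≠ 1) :
    t ^ 2 + t + 1 = 0 := by
  have := Fintype.ofFinite K
  have h4 : t ^ 4 = t := by
    simpa [← Nat.card_eq_fintype_card, hK] using FiniteField.pow_card t
  have : t * (t - 1) * (t ^ 2 + t + 1) = 0 := by linear_combination h4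
  simpa [h₀, sub_eq_zero, h₁] using this

theorem eq_or_eq_add_one_of_card_eq_four (hK : Nat.card K = 4) {s t : K} (hs₀ : s ≠ 0)
    (hs₁ : s ≠ 1) (ht₀ : t ≠ 0) (ht₁ : t ≠ 1) : t = s ∨ t = s + 1 := by
  have : (t - s) * (t - (s + 1)) = 0 := by
    linear_combination sq_add_self_add_one_eq_zero hK ht₀ ht₁ -
      sq_add_self_add_one_eq_zero hK hs₀ hs₁ +
      (s ^ 2 + s - s * t - t) * two_eq_zero_of_card_eq_four hK
  simpa [sub_eq_zero] using this

theorem exists_arcExtensions_insert_stdFrame_eq_singleton (hK : Nat.card K = 4)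
    {x : ℙ K (Fin 3 → K)} (hx : x ∉ stdFrame) (hT : IsArc (insert x stdFrame)) :
    ∃ p, arcExtensions (insert x stdFrame) = {p} := by
  obtain ⟨-, hxoff⟩ := (isArc_insert_iff hx).1 hT
  obtain ⟨y, z, hy₀, hy₁, hz₀, hz₁, hyz, rfl⟩ := mem_offSecants_stdFrame_iff.1 hxoff
  have hz : z = y + 1 :=
    (eq_or_eq_add_one_of_card_eq_four hK hy₀ hy₁ hz₀ hz₁).resolve_left hyz.symm
  have h2 := two_eq_zero_of_card_eq_four hK
  refine ⟨mk K ![1, z, y] (by simp), Set.ext fun p => ⟨fun ⟨hpT, hp⟩ => ?_, ?_⟩⟩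
  · have hpoff := offSecants_anti (Set.subset_insert _ _) ((isArc_insert_iff hpT).1 hp).2
    obtain ⟨y', z', hy'₀, hy'₁, hz'₀, hz'₁, hyz', rfl⟩ := mem_offSecants_stdFrame_iff.1 hpoff
    have hne : ¬(y' = y ∧ z' = z) := fun h => hpT (.inl (mk_one_eq_mk_one_iff.2 h))
    have := eq_or_eq_add_one_of_card_eq_four hK hy₀ hy₁ hy'₀ hy'₁
    have := eq_or_eq_add_one_of_card_eq_four hK hy₀ hy₁ hz'₀ hz'₁
    rw [Set.mem_singleton_iff, mk_one_eq_mk_one_iff]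
    grind
  · rintro rfl
    have hoff : mk K ![1, z, y] (by simp) ∈ offSecants stdFrame :=
      mem_offSecants_stdFrame_iff.2 ⟨z, y, hz₀, hz₁, hy₀, hy₁, hyz.symm, rfl⟩
    have hnot : mk K ![1, z, y] (by simp) ∉ insert (mk K ![1, y, z] (by simp)) stdFrame := by
      rintro (h | h)
      · exact hyz (mk_one_eq_mk_one_iff.1 h).1.symm
      · exact notMem_of_mem_offSecants (q := mk K (Pi.single 0 1) (by simp))
          (r := mk K (Pi.single 1 1) (by simp)) (by simp [stdFrame]) (by simp [stdFrame])
          (by simp [mk_eq_mk_iff', funext_iff, Fin.forall_fin_succ]) hoff h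
    refine ⟨hnot, (isArc_insert_iff hnot).2 ⟨hT, ?_⟩⟩
    have hxq : ∀ q ∈ stdFrame,
        ¬Dependent ![q, mk K ![1, y, z] (by simp), mk K ![1, z, y] (by simp)] := by
      simp only [stdFrame, Set.mem_insert_iff, Set.mem_singleton_iff]
      rintro q (rfl | rfl | rfl | rfl)
      all_goals rw [dependent_mk_three_iff_det]; simp [Matrix.det_fin_three]; grind
    rintro q (rfl | hq) r (rfl | hr) hqr
    · exact absurd rfl hqr
    · rw [← dependent_swap_left]; exact hxq r hr
    · exact hxq q hq
    · exact hoff q hq r hr hqr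

end FourElements
end Projectivization

/-- A five-element subset of `ℙ²(𝔽₄)` with no three points collinear can be extended to a
six-element subset with no three points collinear in exactly 1 way. -/
theorem stmt_8 (S : Finset (ℙ (GaloisField 2 2) (Fin 3 → GaloisField 2 2)))
    (hcard : S.card = 5) (hS : NoThreeCollinear ↑S) :
    Nat.card {p : ℙ (GaloisField 2 2) (Fin 3 → GaloisField 2 2) //
      p ∉ S ∧ NoThreeCollinear (insert p (↑S : Set _))} = 1 := by
  obtain ⟨g, x, hx, hS_eq⟩ := Projectivization.exists_eq_smul_insert_stdFrame hcard hS
  have hT : Projectivization.IsArc (insert x Projectivization.stdFrame) := by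
    rw [← Projectivization.isArc_smul_iff g, ← hS_eq]
    exact hS
  have hK : Nat.card (GaloisField 2 2) = 4 := by rw [GaloisField.card 2 2 two_ne_zero]; rfl
  obtain ⟨p, hp⟩ :=
    Projectivization.exists_arcExtensions_insert_stdFrame_eq_singleton hK hx hT
  change Nat.card (Projectivization.arcExtensions
    (S : Set (ℙ (GaloisField 2 2) (Fin 3 → GaloisField 2 2)))) = 1
  rw [hS_eq, Projectivization.arcExtensions_smul, hp, Set.smul_set_singleton, Nat.card_unique]
end

section
/- Let k be an algebraically closed field of characteristic 2 and let G = x₃⁴ + x₀⁴+x₁⁴+x₂⁴+x₀²x₁²+x₀²x₂²+x₁²x₂²+x₀x₁x₂(x₀+x₁+x₂) ∈ k[x₀,x₁,x₂,x₃]. For a nonzero vector v = (x₀,x₁,x₂,x₃) ∈ k⁴, one has G(v) = 0 together with the vanishing at v of all four partial derivatives of G if and only if v is a scalar multiple of one of the seven vectors (1,1,0,1), (1,0,0,1), (0,1,0,1), (0,0,1,1), (0,1,1,1), (1,0,1,1), (1,1,1,1). In other words, the quartic surface G = 0 in ℙ³(k) has exactly these 7 singular points. -/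
open MvPolynomial

/-- The quartic form `x₃⁴ + x₀⁴+x₁⁴+x₂⁴+x₀²x₁²+x₀²x₂²+x₁²x₂²+x₀x₁x₂(x₀+x₁+x₂)`. -/
noncomputable def G (k : Type*) [CommRing k] : MvPolynomial (Fin 4) k :=
  X 3 ^ 4 + X 0 ^ 4 + X 1 ^ 4 + X 2 ^ 4 + X 0 ^ 2 * X 1 ^ 2 + X 0 ^ 2 * X 2 ^ 2 +
    X 1 ^ 2 * X 2 ^ 2 + X 0 * X 1 * X 2 * (X 0 + X 1 + X 2)

section Aux

variable {k : Type*} [Field k]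

lemma aux_EG (v : Fin 4 → k) :
    eval v (G k) = v 3 ^ 4 + v 0 ^ 4 + v 1 ^ 4 + v 2 ^ 4 + v 0 ^ 2 * v 1 ^ 2 +
      v 0 ^ 2 * v 2 ^ 2 + v 1 ^ 2 * v 2 ^ 2 + v 0 * v 1 * v 2 * (v 0 + v 1 + v 2) := by
  simp [G]

lemma aux_ED0 (h2 : (2:k) = 0) (v : Fin 4 → k) :
    eval v (pderiv 0 (G k)) = v 1 * v 2 * (v 1 + v 2) := by
  simp [G, pderiv_X]
  linear_combination (2*(v 0)^3 + v 0 * (v 1)^2 + v 0*(v 2)^2 + v 0 * v 1 * v 2) * h2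

lemma aux_ED1 (h2 : (2:k) = 0) (v : Fin 4 → k) :
    eval v (pderiv 1 (G k)) = v 0 * v 2 * (v 0 + v 2) := by
  simp [G, pderiv_X]
  linear_combination (2*(v 1)^3 + v 1 * (v 0)^2 + v 1*(v 2)^2 + v 0 * v 1 * v 2) * h2

lemma aux_ED2 (h2 : (2:k) = 0) (v : Fin 4 → k) :
    eval v (pderiv 2 (G k)) = v 0 * v 1 * (v 0 + v 1) := by
  simp [G, pderiv_X]
  linear_combination (2*(v 2)^3 + v 2 * (v 0)^2 + v 2*(v 1)^2 + v 0 * v 1 * v 2) * h2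

lemma aux_ED3 (h2 : (2:k) = 0) (v : Fin 4 → k) :
    eval v (pderiv 3 (G k)) = 0 := by
  simp [G, pderiv_X]
  left; linear_combination 2*h2

lemma aux_quad (h2 : (2:k) = 0) (d t : k) (h : d^4 = t^4) : d = t := by
  have h4 : (d+t)^4 = 0 := by
    linear_combination h + (2*d^3*t+3*d^2*t^2+2*d*t^3+t^4)*h2
  have h0 : d + t = 0 := pow_eq_zero_iff (by norm_num) |>.mp h4
  linear_combination h0 - t*h2

lemma aux_core (h2 : (2:k) = 0) (a b c d : k)
    (E0 : b*c*(b+c) = 0) (E1 : a*c*(a+c) = 0) (E2 : a*b*(a+b) = 0)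
    (EG : d^4+a^4+b^4+c^4+a^2*b^2+a^2*c^2+b^2*c^2+a*b*c*(a+b+c) = 0)
    (hv : ¬(a = 0 ∧ b = 0 ∧ c = 0 ∧ d = 0)) :
    ∃ t : k,
      (a=t ∧ b=t ∧ c=0 ∧ d=t) ∨ (a=t ∧ b=0 ∧ c=0 ∧ d=t) ∨ (a=0 ∧ b=t ∧ c=0 ∧ d=t) ∨
      (a=0 ∧ b=0 ∧ c=t ∧ d=t) ∨ (a=0 ∧ b=t ∧ c=t ∧ d=t) ∨ (a=t ∧ b=0 ∧ c=t ∧ d=t) ∨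
      (a=t ∧ b=t ∧ c=t ∧ d=t) := by
  by_cases ha : a = 0 <;> by_cases hb : b = 0 <;> by_cases hc : c = 0
  · subst ha; subst hb; subst hc
    exact absurd ⟨rfl, rfl, rfl, aux_quad h2 d 0 (by linear_combination EG)⟩ hv
  · subst ha; subst hb
    exact ⟨c, by simp [aux_quad h2 d c (by linear_combination EG - c^4*h2)]⟩
  · subst ha; subst hc
    exact ⟨b, by simp [aux_quad h2 d b (by linear_combination EG - b^4*h2)]⟩
  · subst ha
    have hbc : b = c := by
      rcases mul_eq_zero.mp E0 with h | h
      · rcases mul_eq_zero.mp h with h | h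
        · exact absurd h hb
        · exact absurd h hc
      · linear_combination h - c*h2
    subst hbc
    exact ⟨b, by simp [aux_quad h2 d b (by linear_combination EG - 2*b^4*h2)]⟩
  · subst hb; subst hc
    exact ⟨a, by simp [aux_quad h2 d a (by linear_combination EG - a^4*h2)]⟩
  · subst hb
    have hac : a = c := by
      rcases mul_eq_zero.mp E1 with h | h
      · rcases mul_eq_zero.mp h with h | h
        · exact absurd h ha
        · exact absurd h hc
      · linear_combination h - c*h2
    subst hac
    exact ⟨a, by simp [aux_quad h2 d a (by linear_combination EG - 2*a^4*h2)]⟩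
  · subst hc
    have hab : a = b := by
      rcases mul_eq_zero.mp E2 with h | h
      · rcases mul_eq_zero.mp h with h | h
        · exact absurd h ha
        · exact absurd h hb
      · linear_combination h - b*h2
    subst hab
    exact ⟨a, by simp [aux_quad h2 d a (by linear_combination EG - 2*a^4*h2)]⟩
  · have hab : a = b := by
      rcases mul_eq_zero.mp E2 with h | h
      · rcases mul_eq_zero.mp h with h | h
        · exact absurd h ha
        · exact absurd h hb
      · linear_combination h - b*h2
    subst hab
    have hac : a = c := by
      rcases mul_eq_zero.mp E1 with h | h
      · rcases mul_eq_zero.mp h with h | h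
        · exact absurd h ha
        · exact absurd h hc
      · linear_combination h - c*h2
    subst hac
    exact ⟨a, by simp [aux_quad h2 d a (by linear_combination EG - 5*a^4*h2)]⟩

end Aux

/-- Over an algebraically closed field of characteristic 2, the singular points of the quartic
surface `G = 0` in `ℙ³` are exactly the seven points `(1,1,0,1), (1,0,0,1), (0,1,0,1),
(0,0,1,1), (0,1,1,1), (1,0,1,1), (1,1,1,1)`. -/
theorem stmt_10 (k : Type*) [Field k] [IsAlgClosed k] [CharP k 2]
    (v : Fin 4 → k) (hv : v ≠ 0) :
    (eval v (G k) = 0 ∧ ∀ i : Fin 4, eval v (pderiv i (G k)) = 0) ↔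
      ∃ c : k, ∃ w ∈ ({![1,1,0,1], ![1,0,0,1], ![0,1,0,1], ![0,0,1,1],
          ![0,1,1,1], ![1,0,1,1], ![1,1,1,1]} : Set (Fin 4 → k)),
        v = c • w := by
  have h2 : (2:k) = 0 := by exact_mod_cast CharP.cast_eq_zero k 2
  constructor
  · rintro ⟨hG, hd⟩
    have E0 := (aux_ED0 h2 v) ▸ hd 0
    have E1 := (aux_ED1 h2 v) ▸ hd 1
    have E2 := (aux_ED2 h2 v) ▸ hd 2
    have EG : v 3 ^4 + v 0 ^4 + v 1 ^4 + v 2 ^4 + (v 0)^2*(v 1)^2 + (v 0)^2*(v 2)^2 +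
        (v 1)^2*(v 2)^2 + v 0 * v 1 * v 2 * (v 0 + v 1 + v 2) = 0 := by
      rw [← aux_EG]; exact hG
    have hv' : ¬(v 0 = 0 ∧ v 1 = 0 ∧ v 2 = 0 ∧ v 3 = 0) := by
      rintro ⟨h0, h1, h3, h4⟩
      exact hv (funext fun i => by fin_cases i <;> assumption)
    obtain ⟨t, ht⟩ := aux_core h2 (v 0) (v 1) (v 2) (v 3) E0 E1 E2 (by linear_combination EG) hv'
    rcases ht with ⟨ha,hb,hc,hd'⟩|⟨ha,hb,hc,hd'⟩|⟨ha,hb,hc,hd'⟩|⟨ha,hb,hc,hd'⟩|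
      ⟨ha,hb,hc,hd'⟩|⟨ha,hb,hc,hd'⟩|⟨ha,hb,hc,hd'⟩
    · exact ⟨t, ![1,1,0,1], by simp, funext fun i => by fin_cases i <;> simp [ha,hb,hc,hd']⟩
    · exact ⟨t, ![1,0,0,1], by simp, funext fun i => by fin_cases i <;> simp [ha,hb,hc,hd']⟩
    · exact ⟨t, ![0,1,0,1], by simp, funext fun i => by fin_cases i <;> simp [ha,hb,hc,hd']⟩
    · exact ⟨t, ![0,0,1,1], by simp, funext fun i => by fin_cases i <;> simp [ha,hb,hc,hd']⟩
    · exact ⟨t, ![0,1,1,1], by simp, funext fun i => by fin_cases i <;> simp [ha,hb,hc,hd']⟩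
    · exact ⟨t, ![1,0,1,1], by simp, funext fun i => by fin_cases i <;> simp [ha,hb,hc,hd']⟩
    · exact ⟨t, ![1,1,1,1], by simp, funext fun i => by fin_cases i <;> simp [ha,hb,hc,hd']⟩
  · rintro ⟨t, w, hw, rfl⟩
    have hD : ∀ i : Fin 4, eval (t • w) (pderiv i (G k)) = 0 → True := fun _ _ => trivial
    simp only [Set.mem_insert_iff, Set.mem_singleton_iff] at hw
    have key : ∀ u : Fin 4 → k,
        (u 1 * u 2 * (u 1 + u 2) = 0) → (u 0 * u 2 * (u 0 + u 2) = 0) →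
        (u 0 * u 1 * (u 0 + u 1) = 0) →
        (u 3 ^4 + u 0 ^4 + u 1 ^4 + u 2 ^4 + (u 0)^2*(u 1)^2 + (u 0)^2*(u 2)^2 +
          (u 1)^2*(u 2)^2 + u 0 * u 1 * u 2 * (u 0 + u 1 + u 2) = 0) →
        (eval u (G k) = 0 ∧ ∀ i : Fin 4, eval u (pderiv i (G k)) = 0) := by
      intro u e0 e1 e2 eg
      refine ⟨by rw [aux_EG]; exact eg, fun i => ?_⟩
      fin_cases i
      · show eval u (pderiv 0 (G k)) = 0; rw [aux_ED0 h2]; exact e0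
      · show eval u (pderiv 1 (G k)) = 0; rw [aux_ED1 h2]; exact e1
      · show eval u (pderiv 2 (G k)) = 0; rw [aux_ED2 h2]; exact e2
      · show eval u (pderiv 3 (G k)) = 0; rw [aux_ED3 h2]
    rcases hw with rfl|rfl|rfl|rfl|rfl|rfl|rfl <;>
      refine key _ ?_ ?_ ?_ ?_ <;> simp <;>
        first
          | (right; linear_combination t*h2)
          | linear_combination t^4*h2
          | linear_combination 2*t^4*h2
          | linear_combination 5*t^4*h2
end

section
/- Let a ∈ 𝔽₄ be an element satisfying a² + a + 1 = 0. Then in the polynomial ring 𝔽₄[x₀,x₁,x₂] the following factorization holds: x₀⁴+x₂⁴+x₀²x₁²+x₀²x₂²+x₁²x₂²+x₀x₁x₂(x₀+x₁+x₂) = (x₀²+a·x₂²+x₀x₁+a·x₁x₂)·(x₀²+a²·x₂²+x₀x₁+a²·x₁x₂). In other words, the quartic curve cut on the Dickson quartic surface x₃⁴+F₄ = 0 by the plane x₃ = x₁ splits over 𝔽₄ into the union of two conics. -/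
open MvPolynomial

/-- For `a ∈ 𝔽₄` with `a² + a + 1 = 0`, the quartic obtained from the Dickson quartic surface
by setting `x₃ = x₁` factors over `𝔽₄` as a product of two conics:
`x₀⁴+x₂⁴+x₀²x₁²+x₀²x₂²+x₁²x₂²+x₀x₁x₂(x₀+x₁+x₂)
  = (x₀²+ax₂²+x₀x₁+ax₁x₂)(x₀²+a²x₂²+x₀x₁+a²x₁x₂)`. -/
theorem stmt_12 (a : GaloisField 2 2) (ha : a ^ 2 + a + 1 = 0) :
    (X 0 ^ 4 + X 2 ^ 4 + X 0 ^ 2 * X 1 ^ 2 + X 0 ^ 2 * X 2 ^ 2 + X 1 ^ 2 * X 2 ^ 2 +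
        X 0 * X 1 * X 2 * (X 0 + X 1 + X 2) :
        MvPolynomial (Fin 3) (GaloisField 2 2))
      = (X 0 ^ 2 + C a * X 2 ^ 2 + X 0 * X 1 + C a * (X 1 * X 2)) *
        (X 0 ^ 2 + C (a ^ 2) * X 2 ^ 2 + X 0 * X 1 + C (a ^ 2) * (X 1 * X 2)) := by
  have hC : (C a : MvPolynomial (Fin 3) (GaloisField 2 2)) ^ 2 + C a + 1 = 0 := by
    have := congrArg (C : GaloisField 2 2 →+* MvPolynomial (Fin 3) (GaloisField 2 2)) ha
    simpa using this
  have h2 : (2 : MvPolynomial (Fin 3) (GaloisField 2 2)) = 0 := by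
    have : ((2 : ℕ) : MvPolynomial (Fin 3) (GaloisField 2 2)) = 0 := by
      exact_mod_cast CharP.cast_eq_zero (MvPolynomial (Fin 3) (GaloisField 2 2)) 2
    simpa using this
  simp only [map_pow]
  linear_combination
    (-(((X 0:MvPolynomial (Fin 3) (GaloisField 2 2)) ^ 2 + X 0 * X 1) * (X 2 ^ 2 + X 1 * X 2)) +
      (1 - C a) * (X 2 ^ 4 + X 1 ^ 2 * X 2 ^ 2)) * hC +
    (-(X 0 ^ 3 * X 1) + ((X 0:MvPolynomial (Fin 3) (GaloisField 2 2)) ^ 2 + X 0 * X 1) *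
      (X 2 ^ 2 + X 1 * X 2) - (C a) ^ 3 * X 1 * X 2 ^ 3) * h2
end
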